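/- arXiv:0809.4735 — 3 statements merged into one kernel-verified Lean document; each statement's English description precedes it below -/
import Mathlib

section
/- A topological space is homeomorphic to the Cantor set if and only if it is a nonempty, second countable, compact, Hausdorff, totally disconnected space with no isolated points. -/
open Set Filter Topology PiNat

/-!
Choose clopen sets `V n` separating the points of `X`, which second countability allows. Build a
binary tree of nonempty clopen cells by splitting each cell of length `n` into two nonempty clopen
halves, which is possible because no point is isolated, and splitting along `V n` whenever `V n`
cuts the cell. Sending a point to its branch in the tree is then a continuous injection into
`ℕ → Bool`, surjective by compactness, hence a homeomorphism.
-/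

theorem not_isOpen_singleton_cantor (y : ℕ → Bool) : ¬ IsOpen ({y} : Set (ℕ → Bool)) := by
  intro hy
  have hflip : Tendsto (fun n => Function.update y n (!y n)) atTop (𝓝 y) :=
    tendsto_pi_nhds.2 fun k => tendsto_const_nhds.congr' <|
      (eventually_gt_atTop k).mono fun n hn => (Function.update_of_ne hn.ne _ _).symm
  obtain ⟨n, hn⟩ := (hflip.eventually (hy.mem_nhds rfl)).exists
  simpa using congrFun hn n

/-- Words grow at their head, as in `PiNat.res`. -/
structure ClopenBinaryScheme (X : Type*) [TopologicalSpace X] where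
  cell : List Bool → Set X
  isClopen_cell : ∀ l, IsClopen (cell l)
  nonempty_cell : ∀ l, (cell l).Nonempty
  cell_nil : cell [] = univ
  cell_true_union_cell_false : ∀ l, cell (true :: l) ∪ cell (false :: l) = cell l
  disjoint_cell_true_cell_false : ∀ l, Disjoint (cell (true :: l)) (cell (false :: l))

namespace ClopenBinaryScheme

variable {X : Type*} [TopologicalSpace X] (A : ClopenBinaryScheme X)

theorem cell_cons_subset (b : Bool) (l : List Bool) : A.cell (b :: l) ⊆ A.cell l := by
  rw [← A.cell_true_union_cell_false l]
  cases b
  exacts [subset_union_right, subset_union_left]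

theorem disjoint_cell_of_length_eq {l l' : List Bool} (hlen : l.length = l'.length)
    (hne : l ≠ l') : Disjoint (A.cell l) (A.cell l') := by
  induction l generalizing l' with
  | nil => exact absurd (List.length_eq_zero_iff.1 hlen.symm).symm hne
  | cons b l ih =>
    obtain ⟨b', l', rfl⟩ := List.exists_cons_of_length_eq_add_one hlen.symm
    by_cases hl : l = l'
    · subst hl
      cases b <;> cases b' <;> simp_all [A.disjoint_cell_true_cell_false l,
        (A.disjoint_cell_true_cell_false l).symm]
    · exact (ih (by simpa using hlen) hl).mono (A.cell_cons_subset b l) (A.cell_cons_subset b' l')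

def trueSet (n : ℕ) : Set X := ⋃ l ∈ {l : List Bool | l.length = n}, A.cell (true :: l)

theorem isClopen_trueSet (n : ℕ) : IsClopen (A.trueSet n) :=
  (List.finite_length_eq Bool n).isClopen_biUnion fun _ _ => A.isClopen_cell _

noncomputable def code (x : X) (n : ℕ) : Bool := (A.trueSet n).boolIndicator x

theorem code_eq_true_iff {x : X} {l : List Bool} (hx : x ∈ A.cell l) :
    A.code x l.length = true ↔ x ∈ A.cell (true :: l) := by
  rw [code, ← mem_iff_boolIndicator, trueSet, mem_iUnion₂]
  refine ⟨fun ⟨l', hl', hxl'⟩ => ?_, fun hx' => ⟨l, rfl, hx'⟩⟩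
  obtain rfl : l' = l := by
    by_contra hne
    exact (A.disjoint_cell_of_length_eq hl' hne).notMem_of_mem_left
      (A.cell_cons_subset _ _ hxl') hx
  exact hxl'

theorem mem_cell_iff (x : X) (l : List Bool) : x ∈ A.cell l ↔ res (A.code x) l.length = l := by
  induction l with
  | nil => simp [A.cell_nil]
  | cons b l ih =>
    rw [List.length_cons, res_succ, List.cons.injEq, ← ih]
    constructor
    · intro hx
      have hxl := A.cell_cons_subset b l hx
      refine ⟨?_, hxl⟩
      cases b
      · rw [← Bool.not_eq_true, A.code_eq_true_iff hxl]
        exact (A.disjoint_cell_true_cell_false l).notMem_of_mem_right hx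
      · exact (A.code_eq_true_iff hxl).2 hx
    · rintro ⟨rfl, hxl⟩
      cases hcode : A.code x l.length
      · have hx := A.cell_true_union_cell_false l ▸ hxl
        exact hx.resolve_left fun hxt => by simp [(A.code_eq_true_iff hxl).2 hxt] at hcode
      · exact (A.code_eq_true_iff hxl).1 hcode

theorem continuous_code : Continuous A.code :=
  continuous_pi fun n => (continuous_boolIndicator_iff_isClopen _).2 (A.isClopen_trueSet n)

theorem surjective_code [CompactSpace X] : Function.Surjective A.code := by
  intro s
  obtain ⟨x, hx⟩ := IsCompact.nonempty_iInter_of_sequence_nonempty_isCompact_isClosed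
    (fun n => A.cell (res s n)) (fun n => A.cell_cons_subset _ _) (fun n => A.nonempty_cell _)
    (A.isClopen_cell _).isClosed.isCompact (fun n => (A.isClopen_cell _).isClosed)
  refine ⟨x, res_injective (funext fun n => ?_)⟩
  simpa [res_length] using (A.mem_cell_iff x _).1 (mem_iInter.1 hx n)

def SeparatesPoints : Prop := ∀ x y : X, x ≠ y → ∃ l, x ∈ A.cell l ∧ y ∉ A.cell l

theorem injective_code (hsep : A.SeparatesPoints) : Function.Injective A.code := by
  intro x y hxy
  by_contra hne
  obtain ⟨l, hx, hy⟩ := hsep x y hne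
  exact hy ((A.mem_cell_iff y l).2 (hxy ▸ (A.mem_cell_iff x l).1 hx))

noncomputable def homeomorphCantor [CompactSpace X] (hsep : A.SeparatesPoints) :
    X ≃ₜ (ℕ → Bool) :=
  A.continuous_code.homeoOfEquivCompactToT2
    (f := Equiv.ofBijective _ ⟨A.injective_code hsep, A.surjective_code⟩)

end ClopenBinaryScheme

section Construction

variable {X : Type*} [TopologicalSpace X]

theorem exists_isClopen_separating_seq [Nonempty X] [SecondCountableTopology X] [CompactSpace X]
    [T2Space X] [TotallyDisconnectedSpace X] :
    ∃ V : ℕ → Set X, (∀ n, IsClopen (V n)) ∧ ∀ x y, x ≠ y → ∃ n, x ∈ V n ∧ y ∉ V n := by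
  obtain ⟨𝒱, h𝒱, h𝒱c, h𝒱b⟩ := isTopologicalBasis_isClopen.exists_countable (α := X)
  obtain ⟨V, hV, -⟩ := h𝒱b.exists_subset_of_mem_open (mem_univ (Classical.arbitrary X)) isOpen_univ
  obtain ⟨V, rfl⟩ := h𝒱c.exists_eq_range ⟨V, hV⟩
  refine ⟨V, fun n => h𝒱 (mem_range_self n), fun x y hxy => ?_⟩
  obtain ⟨_, ⟨n, rfl⟩, hx, hy⟩ :=
    h𝒱b.exists_subset_of_mem_open (mem_compl_singleton_iff.2 hxy) isOpen_compl_singleton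
  exact ⟨n, hx, fun h => hy h rfl⟩

theorem IsClopen.exists_isClopen_split [TotallySeparatedSpace X]
    (hperf : ∀ x : X, ¬ IsOpen ({x} : Set X)) {C : Set X} (hC : IsClopen C) (hne : C.Nonempty) :
    ∃ B, IsClopen B ∧ B ⊆ C ∧ B.Nonempty ∧ (C \ B).Nonempty := by
  obtain ⟨x, rfl⟩ | ⟨x, hx, y, hy, hxy⟩ := hne.exists_eq_singleton_or_nontrivial
  · exact absurd hC.isOpen (hperf x)
  obtain ⟨U, hU, hxU, hyU⟩ := exists_isClopen_of_totally_separated hxy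
  exact ⟨C ∩ U, hC.inter hU, inter_subset_left, ⟨x, hx, hxU⟩, ⟨y, hy, fun h => hyU h.2⟩⟩

theorem IsClopen.exists_isClopen_split_separating [TotallySeparatedSpace X]
    (hperf : ∀ x : X, ¬ IsOpen ({x} : Set X)) {C V : Set X} (hC : IsClopen C) (hne : C.Nonempty)
    (hV : IsClopen V) :
    ∃ B, IsClopen B ∧ B ⊆ C ∧ B.Nonempty ∧ (C \ B).Nonempty ∧
      ∀ x ∈ C ∩ V, ∀ y ∈ C \ V, x ∈ B ∧ y ∉ B := by
  by_cases hsplit : (C ∩ V).Nonempty ∧ (C \ V).Nonempty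
  · refine ⟨C ∩ V, hC.inter hV, inter_subset_left, hsplit.1,
      by rw [sdiff_self_inter]; exact hsplit.2, fun x hx y hy => ⟨hx, fun h => hy.2 h.2⟩⟩
  · obtain ⟨B, hB, hBC, hBne, hCBne⟩ := hC.exists_isClopen_split hperf hne
    exact ⟨B, hB, hBC, hBne, hCBne, fun x hx y hy => absurd ⟨⟨x, hx⟩, ⟨y, hy⟩⟩ hsplit⟩

def splitCells (B : Set X → ℕ → Set X) : List Bool → Set X
  | [] => univ
  | true :: l => B (splitCells B l) l.length
  | false :: l => splitCells B l \ B (splitCells B l) l.length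

theorem exists_separating_clopenBinaryScheme [Nonempty X] [SecondCountableTopology X]
    [CompactSpace X] [T2Space X] [TotallyDisconnectedSpace X]
    (hperf : ∀ x : X, ¬ IsOpen ({x} : Set X)) :
    ∃ A : ClopenBinaryScheme X, A.SeparatesPoints := by
  obtain ⟨V, hV, hsep⟩ := exists_isClopen_separating_seq (X := X)
  choose! B hB using fun C n (hC : IsClopen C) (hne : C.Nonempty) =>
    hC.exists_isClopen_split_separating hperf hne (hV n)
  have hcell : ∀ l, IsClopen (splitCells B l) ∧ (splitCells B l).Nonempty := by
    intro l
    induction l with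
    | nil => exact ⟨isClopen_univ, univ_nonempty⟩
    | cons b l ih =>
      obtain ⟨hBc, -, hBne, hdiff, -⟩ := hB _ l.length ih.1 ih.2
      cases b
      exacts [⟨ih.1.diff hBc, hdiff⟩, ⟨hBc, hBne⟩]
  let A : ClopenBinaryScheme X :=
    { cell := splitCells B
      isClopen_cell := fun l => (hcell l).1
      nonempty_cell := fun l => (hcell l).2
      cell_nil := rfl
      cell_true_union_cell_false := fun l =>
        union_sdiff_cancel (hB _ l.length (hcell l).1 (hcell l).2).2.1
      disjoint_cell_true_cell_false := fun _ => disjoint_sdiff_right }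
  refine ⟨A, fun x y hxy => ?_⟩
  obtain ⟨n, hxV, hyV⟩ := hsep x y hxy
  set l := res (A.code x) n
  have hxl : x ∈ A.cell l := (A.mem_cell_iff x l).2 (by rw [res_length])
  by_cases hyl : y ∈ A.cell l
  · have hlen : l.length = n := res_length _ _
    refine ⟨true :: l, ?_⟩
    simpa only [A, splitCells, hlen] using
      (hB _ n (hcell l).1 (hcell l).2).2.2.2.2 x ⟨hxl, hxV⟩ y ⟨hyl, hyV⟩
  · exact ⟨l, hxl, hyl⟩

end Construction

/-- A topological space is homeomorphic to the Cantor set `{0,1}^ℕ` if and only if it is a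
nonempty, second countable, compact, Hausdorff, totally disconnected space with no
isolated points. -/
theorem homeomorph_cantor_iff (X : Type) [TopologicalSpace X] :
    Nonempty (X ≃ₜ (ℕ → Bool)) ↔
      (Nonempty X ∧ SecondCountableTopology X ∧ CompactSpace X ∧ T2Space X ∧
        TotallyDisconnectedSpace X ∧ ∀ x : X, ¬ IsOpen ({x} : Set X)) := by
  constructor
  · rintro ⟨e⟩
    exact ⟨⟨e.symm fun _ => false⟩, e.isEmbedding.secondCountableTopology, e.symm.compactSpace,
      e.isEmbedding.t2Space, e.symm.totallyDisconnectedSpace,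
      fun x hx => not_isOpen_singleton_cantor (e x) (by simpa using e.isOpenMap _ hx)⟩
  · rintro ⟨_, _, _, _, _, hperf⟩
    obtain ⟨A, hsep⟩ := exists_separating_clopenBinaryScheme hperf
    exact ⟨A.homeomorphCantor hsep⟩
end

section
/- Let G = G₁ × G₂ be a profinite group with projections π onto G₁ and ρ onto G₂, and let H be a closed subgroup of G. Then π(H) = HG₂ ∩ G₁, H ∩ G₁ is a closed normal subgroup of HG₂ ∩ G₁, (H ∩ G₁) × (H ∩ G₂) is a closed normal subgroup of H, and there are topological group isomorphisms (HG₂ ∩ G₁)/(H ∩ G₁) ≅ (HG₁ ∩ G₂)/(H ∩ G₂) ≅ H/((H ∩ G₁) × (H ∩ G₂)). -/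
/-!
The maps `(x, y) ↦ (x, 1)` and `(x, y) ↦ (1, y)` send `H` onto `HG₂ ∩ G₁` and `HG₁ ∩ G₂`.
Followed by the quotient maps by `H ∩ G₁` and `H ∩ G₂`, both have kernel
`(H ∩ G₁)(H ∩ G₂) = {(x, y) | (x, 1) ∈ H, (1, y) ∈ H}`, which is normal in `H` as the product of
the normal subgroups `H ∩ G₁` and `H ∩ G₂`. The induced continuous bijections from the compact
group `H/((H ∩ G₁)(H ∩ G₂))` onto the Hausdorff quotients are therefore homeomorphisms.
-/

open Function

noncomputable def QuotientGroup.liftContinuousMulEquiv {K Q : Type*} [Group K]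
    [TopologicalSpace K] [CompactSpace K] [Group Q] [TopologicalSpace Q] [T2Space Q]
    (N : Subgroup K) [N.Normal] (φ : K →* Q) (hφ : Continuous φ) (hsurj : Surjective φ)
    (hN : N = φ.ker) : K ⧸ N ≃ₜ* Q :=
  { QuotientGroup.liftEquiv N hsurj hN with
    toHomeomorph := Continuous.homeoOfEquivCompactToT2
      (f := (QuotientGroup.liftEquiv N hsurj hN).toEquiv)
      ((QuotientGroup.isQuotientMap_mk N).continuous_iff.mpr hφ) }

namespace Subgroup

section Algebraic

variable {G₁ G₂ : Type*} [Group G₁] [Group G₂] (H : Subgroup (G₁ × G₂))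

theorem map_inl_map_fst_eq :
    (H.map (MonoidHom.fst G₁ G₂)).map (MonoidHom.inl G₁ G₂)
      = (H ⊔ (⊥ : Subgroup G₁).prod ⊤) ⊓ (⊤ : Subgroup G₁).prod ⊥ := by
  rw [← MonoidHom.ker_fst, ← comap_map_eq]
  ext ⟨x, y⟩
  simp [mem_prod, eq_comm]

theorem map_inr_map_snd_eq :
    (H.map (MonoidHom.snd G₁ G₂)).map (MonoidHom.inr G₁ G₂)
      = (H ⊔ (⊤ : Subgroup G₁).prod ⊥) ⊓ (⊥ : Subgroup G₁).prod ⊤ := by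
  rw [← MonoidHom.ker_snd, ← comap_map_eq]
  ext ⟨x, y⟩
  simp [mem_prod, eq_comm]

theorem inf_prod_top_bot_sup_inf_prod_bot_top :
    (H ⊓ (⊤ : Subgroup G₁).prod ⊥) ⊔ (H ⊓ (⊥ : Subgroup G₁).prod ⊤)
      = H.goursatFst.prod H.goursatSnd := by
  apply le_antisymm
  · refine sup_le ?_ ?_ <;> rintro ⟨x, y⟩ ⟨hH, hxy⟩ <;> simp_all [mem_prod, one_mem]
  · rintro ⟨x, y⟩ ⟨hx, hy⟩
    have hx' : (x, (1 : G₂)) ∈ H ⊓ (⊤ : Subgroup G₁).prod ⊥ :=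
      ⟨mem_goursatFst.mp hx, by simp [mem_prod]⟩
    have hy' : ((1 : G₁), y) ∈ H ⊓ (⊥ : Subgroup G₁).prod ⊤ :=
      ⟨mem_goursatSnd.mp hy, by simp [mem_prod]⟩
    simpa using mul_mem (mem_sup_left hx') (mem_sup_right hy')

instance normal_inf_prod_top_bot_sup_inf_prod_bot_top_subgroupOf :
    (((H ⊓ (⊤ : Subgroup G₁).prod ⊥) ⊔ (H ⊓ (⊥ : Subgroup G₁).prod ⊤)).subgroupOf H).Normal := by
  rw [subgroupOf_sup inf_le_left inf_le_left, inf_subgroupOf_left, inf_subgroupOf_left]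
  infer_instance

def projFstFactor : H →* ↥((H ⊔ (⊥ : Subgroup G₁).prod ⊤) ⊓ (⊤ : Subgroup G₁).prod ⊥) :=
  (((MonoidHom.inl G₁ G₂).comp (MonoidHom.fst G₁ G₂)).comp H.subtype).codRestrict _ fun h => by
    rw [← map_inl_map_fst_eq]
    exact mem_map_of_mem _ (mem_map_of_mem _ h.2)

def projSndFactor : H →* ↥((H ⊔ (⊤ : Subgroup G₁).prod ⊥) ⊓ (⊥ : Subgroup G₁).prod ⊤) :=
  (((MonoidHom.inr G₁ G₂).comp (MonoidHom.snd G₁ G₂)).comp H.subtype).codRestrict _ fun h => by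
    rw [← map_inr_map_snd_eq]
    exact mem_map_of_mem _ (mem_map_of_mem _ h.2)

theorem projFstFactor_surjective : Surjective H.projFstFactor := by
  rintro ⟨g, hg⟩
  rw [← map_inl_map_fst_eq] at hg
  obtain ⟨_, ⟨h, hh, rfl⟩, rfl⟩ := hg
  exact ⟨⟨h, hh⟩, rfl⟩

theorem projSndFactor_surjective : Surjective H.projSndFactor := by
  rintro ⟨g, hg⟩
  rw [← map_inr_map_snd_eq] at hg
  obtain ⟨_, ⟨h, hh, rfl⟩, rfl⟩ := hg
  exact ⟨⟨h, hh⟩, rfl⟩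

theorem comap_projFstFactor :
    ((H ⊓ (⊤ : Subgroup G₁).prod ⊥).subgroupOf
        ((H ⊔ (⊥ : Subgroup G₁).prod ⊤) ⊓ (⊤ : Subgroup G₁).prod ⊥)).comap H.projFstFactor
      = ((H ⊓ (⊤ : Subgroup G₁).prod ⊥) ⊔ (H ⊓ (⊥ : Subgroup G₁).prod ⊤)).subgroupOf H := by
  ext ⟨⟨x, y⟩, hxy⟩
  rw [inf_prod_top_bot_sup_inf_prod_bot_top]
  suffices (x, 1) ∈ H → (1, y) ∈ H by simpa [projFstFactor, mem_subgroupOf, mem_prod]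
  exact fun hx => by simpa using mul_mem (inv_mem hx) hxy

theorem comap_projSndFactor :
    ((H ⊓ (⊥ : Subgroup G₁).prod ⊤).subgroupOf
        ((H ⊔ (⊤ : Subgroup G₁).prod ⊥) ⊓ (⊥ : Subgroup G₁).prod ⊤)).comap H.projSndFactor
      = ((H ⊓ (⊤ : Subgroup G₁).prod ⊥) ⊔ (H ⊓ (⊥ : Subgroup G₁).prod ⊤)).subgroupOf H := by
  ext ⟨⟨x, y⟩, hxy⟩
  rw [inf_prod_top_bot_sup_inf_prod_bot_top]
  suffices (1, y) ∈ H → (x, 1) ∈ H by simpa [projSndFactor, mem_subgroupOf, mem_prod]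
  exact fun hy => by simpa using mul_mem hxy (inv_mem hy)

instance normal_inf_prod_top_bot_subgroupOf :
    ((H ⊓ (⊤ : Subgroup G₁).prod ⊥).subgroupOf
      ((H ⊔ (⊥ : Subgroup G₁).prod ⊤) ⊓ (⊤ : Subgroup G₁).prod ⊥)).Normal :=
  (normal_comap_iff_of_surjective H.projFstFactor_surjective).mp
    (H.comap_projFstFactor ▸ inferInstance)

instance normal_inf_prod_bot_top_subgroupOf :
    ((H ⊓ (⊥ : Subgroup G₁).prod ⊤).subgroupOf
      ((H ⊔ (⊤ : Subgroup G₁).prod ⊥) ⊓ (⊥ : Subgroup G₁).prod ⊤)).Normal :=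
  (normal_comap_iff_of_surjective H.projSndFactor_surjective).mp
    (H.comap_projSndFactor ▸ inferInstance)

end Algebraic

theorem subgroupOf_isClosed {G : Type*} [Group G] [TopologicalSpace G] (U K : Subgroup G)
    (h : IsClosed (K : Set G)) : IsClosed (K.subgroupOf U : Set U) := by
  rw [coe_subgroupOf]
  exact h.preimage continuous_subtype_val

section Topological

variable {G₁ G₂ : Type*} [Group G₁] [Group G₂] [TopologicalSpace G₁] [TopologicalSpace G₂]

theorem isClosed_prod_top_bot [T1Space G₂] :
    IsClosed ((⊤ : Subgroup G₁).prod (⊥ : Subgroup G₂) : Set (G₁ × G₂)) := by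
  rw [coe_prod, coe_top, coe_bot]
  exact isClosed_univ.prod isClosed_singleton

theorem isClosed_prod_bot_top [T1Space G₁] :
    IsClosed ((⊥ : Subgroup G₁).prod (⊤ : Subgroup G₂) : Set (G₁ × G₂)) := by
  rw [coe_prod, coe_top, coe_bot]
  exact isClosed_singleton.prod isClosed_univ

variable {H : Subgroup (G₁ × G₂)}

theorem isClosed_goursatFst (hH : IsClosed (H : Set (G₁ × G₂))) :
    IsClosed (H.goursatFst : Set G₁) := by
  have : (H.goursatFst : Set G₁) = (·, (1 : G₂)) ⁻¹' H := Set.ext fun _ => mem_goursatFst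
  exact this ▸ hH.preimage (by fun_prop)

theorem isClosed_goursatSnd (hH : IsClosed (H : Set (G₁ × G₂))) :
    IsClosed (H.goursatSnd : Set G₂) := by
  have : (H.goursatSnd : Set G₂) = ((1 : G₁), ·) ⁻¹' H := Set.ext fun _ => mem_goursatSnd
  exact this ▸ hH.preimage (by fun_prop)

theorem continuous_projFstFactor : Continuous H.projFstFactor :=
  ((continuous_subtype_val.fst).prodMk continuous_const).subtype_mk _

theorem continuous_projSndFactor : Continuous H.projSndFactor :=
  (continuous_const.prodMk continuous_subtype_val.snd).subtype_mk _

variable [T2Space G₁] [T2Space G₂] (H) [CompactSpace H]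

theorem isClosed_of_compactSpace : IsClosed (H : Set (G₁ × G₂)) :=
  (isCompact_iff_compactSpace.mpr ‹_›).isClosed

variable [IsTopologicalGroup G₁] [IsTopologicalGroup G₂]

noncomputable def quotientEquivFstFactorQuotient :
    H ⧸ ((H ⊓ (⊤ : Subgroup G₁).prod ⊥) ⊔ (H ⊓ (⊥ : Subgroup G₁).prod ⊤)).subgroupOf H ≃ₜ*
      ↥((H ⊔ (⊥ : Subgroup G₁).prod ⊤) ⊓ (⊤ : Subgroup G₁).prod ⊥) ⧸
        (H ⊓ (⊤ : Subgroup G₁).prod ⊥).subgroupOf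
          ((H ⊔ (⊥ : Subgroup G₁).prod ⊤) ⊓ (⊤ : Subgroup G₁).prod ⊥) :=
  have : IsClosed ((H ⊓ (⊤ : Subgroup G₁).prod ⊥).subgroupOf
      ((H ⊔ (⊥ : Subgroup G₁).prod ⊤) ⊓ (⊤ : Subgroup G₁).prod ⊥) :
        Set ↥((H ⊔ (⊥ : Subgroup G₁).prod ⊤) ⊓ (⊤ : Subgroup G₁).prod ⊥)) :=
    subgroupOf_isClosed _ _ (H.isClosed_of_compactSpace.inter isClosed_prod_top_bot)
  QuotientGroup.liftContinuousMulEquiv _ ((QuotientGroup.mk' _).comp H.projFstFactor)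
    (QuotientGroup.continuous_mk.comp continuous_projFstFactor)
    ((QuotientGroup.mk'_surjective _).comp H.projFstFactor_surjective)
    (by rw [← MonoidHom.comap_ker, QuotientGroup.ker_mk', comap_projFstFactor])

noncomputable def quotientEquivSndFactorQuotient :
    H ⧸ ((H ⊓ (⊤ : Subgroup G₁).prod ⊥) ⊔ (H ⊓ (⊥ : Subgroup G₁).prod ⊤)).subgroupOf H ≃ₜ*
      ↥((H ⊔ (⊤ : Subgroup G₁).prod ⊥) ⊓ (⊥ : Subgroup G₁).prod ⊤) ⧸
        (H ⊓ (⊥ : Subgroup G₁).prod ⊤).subgroupOf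
          ((H ⊔ (⊤ : Subgroup G₁).prod ⊥) ⊓ (⊥ : Subgroup G₁).prod ⊤) :=
  have : IsClosed ((H ⊓ (⊥ : Subgroup G₁).prod ⊤).subgroupOf
      ((H ⊔ (⊤ : Subgroup G₁).prod ⊥) ⊓ (⊥ : Subgroup G₁).prod ⊤) :
        Set ↥((H ⊔ (⊤ : Subgroup G₁).prod ⊥) ⊓ (⊥ : Subgroup G₁).prod ⊤)) :=
    subgroupOf_isClosed _ _ (H.isClosed_of_compactSpace.inter isClosed_prod_bot_top)
  QuotientGroup.liftContinuousMulEquiv _ ((QuotientGroup.mk' _).comp H.projSndFactor)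
    (QuotientGroup.continuous_mk.comp continuous_projSndFactor)
    ((QuotientGroup.mk'_surjective _).comp H.projSndFactor_surjective)
    (by rw [← MonoidHom.comap_ker, QuotientGroup.ker_mk', comap_projSndFactor])

end Topological

end Subgroup

theorem goursat_profinite_general {G₁ G₂ : Type*} [Group G₁] [Group G₂]
    [TopologicalSpace G₁] [TopologicalSpace G₂] [IsTopologicalGroup G₁] [IsTopologicalGroup G₂]
    [CompactSpace G₁] [CompactSpace G₂] [T2Space G₁] [T2Space G₂]
    (H : Subgroup (G₁ × G₂)) (hH : IsClosed (H : Set (G₁ × G₂))) :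
    let A : Subgroup (G₁ × G₂) := (⊤ : Subgroup G₁).prod ⊥
    let B : Subgroup (G₁ × G₂) := (⊥ : Subgroup G₁).prod ⊤
    (Subgroup.map (MonoidHom.inl G₁ G₂) (Subgroup.map (MonoidHom.fst G₁ G₂) H)
        = (H ⊔ B) ⊓ A) ∧
    (Subgroup.map (MonoidHom.inr G₁ G₂) (Subgroup.map (MonoidHom.snd G₁ G₂) H)
        = (H ⊔ A) ⊓ B) ∧
    IsClosed ((H ⊓ A : Subgroup (G₁ × G₂)) : Set (G₁ × G₂)) ∧
    ((H ⊓ A).subgroupOf ((H ⊔ B) ⊓ A)).Normal ∧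
    ((H ⊓ B).subgroupOf ((H ⊔ A) ⊓ B)).Normal ∧
    IsClosed (((H ⊓ A) ⊔ (H ⊓ B) : Subgroup (G₁ × G₂)) : Set (G₁ × G₂)) ∧
    (((H ⊓ A) ⊔ (H ⊓ B)).subgroupOf H).Normal ∧
    (∀ (i1 : ((H ⊓ A).subgroupOf ((H ⊔ B) ⊓ A)).Normal)
       (i2 : ((H ⊓ B).subgroupOf ((H ⊔ A) ⊓ B)).Normal)
       (i3 : (((H ⊓ A) ⊔ (H ⊓ B)).subgroupOf H).Normal),
      ∃ (e : (↥((H ⊔ B) ⊓ A) ⧸ (H ⊓ A).subgroupOf ((H ⊔ B) ⊓ A)) ≃ₜ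
             (↥((H ⊔ A) ⊓ B) ⧸ (H ⊓ B).subgroupOf ((H ⊔ A) ⊓ B)))
        (f : (↥((H ⊔ A) ⊓ B) ⧸ (H ⊓ B).subgroupOf ((H ⊔ A) ⊓ B)) ≃ₜ
             (↥H ⧸ ((H ⊓ A) ⊔ (H ⊓ B)).subgroupOf H)),
        (∀ a b, e (a * b) = e a * e b) ∧ (∀ a b, f (a * b) = f a * f b)) := by
  intro A B
  have : CompactSpace H := isCompact_iff_compactSpace.mp hH.isCompact
  let e₁ := H.quotientEquivFstFactorQuotient
  let e₂ := H.quotientEquivSndFactorQuotient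
  refine ⟨H.map_inl_map_fst_eq, H.map_inr_map_snd_eq, hH.inter Subgroup.isClosed_prod_top_bot,
    inferInstance, inferInstance, ?_, inferInstance,
    fun _ _ _ => ⟨(e₁.symm.trans e₂).toHomeomorph, e₂.symm.toHomeomorph,
      map_mul (e₁.symm.trans e₂), map_mul e₂.symm⟩⟩
  rw [Subgroup.inf_prod_top_bot_sup_inf_prod_bot_top, Subgroup.coe_prod]
  exact (Subgroup.isClosed_goursatFst hH).prod (Subgroup.isClosed_goursatSnd hH)

/-- Goursat's lemma for profinite groups. Let `G = G₁ × G₂` be a profinite group, `H` a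
closed subgroup. Identifying `G₁` and `G₂` with the factors `G₁ × 1` and `1 × G₂`
(`A` and `B` below), we have `π(H) = HG₂ ∩ G₁`, `H ∩ G₁` is a closed normal subgroup of
`HG₂ ∩ G₁`, `(H ∩ G₁) × (H ∩ G₂)` is a closed normal subgroup of `H`, and
`(HG₂ ∩ G₁)/(H ∩ G₁) ≅ (HG₁ ∩ G₂)/(H ∩ G₂) ≅ H/((H ∩ G₁) × (H ∩ G₂))` as
topological groups. -/
theorem goursat_profinite {G₁ G₂ : Type*} [Group G₁] [Group G₂]
    [TopologicalSpace G₁] [TopologicalSpace G₂] [IsTopologicalGroup G₁] [IsTopologicalGroup G₂]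
    [CompactSpace G₁] [CompactSpace G₂] [T2Space G₁] [T2Space G₂]
    [TotallyDisconnectedSpace G₁] [TotallyDisconnectedSpace G₂]
    (H : Subgroup (G₁ × G₂)) (hH : IsClosed (H : Set (G₁ × G₂))) :
    let A : Subgroup (G₁ × G₂) := (⊤ : Subgroup G₁).prod ⊥
    let B : Subgroup (G₁ × G₂) := (⊥ : Subgroup G₁).prod ⊤
    (Subgroup.map (MonoidHom.inl G₁ G₂) (Subgroup.map (MonoidHom.fst G₁ G₂) H)
        = (H ⊔ B) ⊓ A) ∧
    (Subgroup.map (MonoidHom.inr G₁ G₂) (Subgroup.map (MonoidHom.snd G₁ G₂) H)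
        = (H ⊔ A) ⊓ B) ∧
    IsClosed ((H ⊓ A : Subgroup (G₁ × G₂)) : Set (G₁ × G₂)) ∧
    ((H ⊓ A).subgroupOf ((H ⊔ B) ⊓ A)).Normal ∧
    ((H ⊓ B).subgroupOf ((H ⊔ A) ⊓ B)).Normal ∧
    IsClosed (((H ⊓ A) ⊔ (H ⊓ B) : Subgroup (G₁ × G₂)) : Set (G₁ × G₂)) ∧
    (((H ⊓ A) ⊔ (H ⊓ B)).subgroupOf H).Normal ∧
    (∀ (i1 : ((H ⊓ A).subgroupOf ((H ⊔ B) ⊓ A)).Normal)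
       (i2 : ((H ⊓ B).subgroupOf ((H ⊔ A) ⊓ B)).Normal)
       (i3 : (((H ⊓ A) ⊔ (H ⊓ B)).subgroupOf H).Normal),
      ∃ (e : (↥((H ⊔ B) ⊓ A) ⧸ (H ⊓ A).subgroupOf ((H ⊔ B) ⊓ A)) ≃ₜ
             (↥((H ⊔ A) ⊓ B) ⧸ (H ⊓ B).subgroupOf ((H ⊔ A) ⊓ B)))
        (f : (↥((H ⊔ A) ⊓ B) ⧸ (H ⊓ B).subgroupOf ((H ⊔ A) ⊓ B)) ≃ₜ
             (↥H ⧸ ((H ⊓ A) ⊔ (H ⊓ B)).subgroupOf H)),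
        (∀ a b, e (a * b) = e a * e b) ∧ (∀ a b, f (a * b) = f a * f b)) :=
  goursat_profinite_general H hH
end

section
/- Let G be a profinite group, H a closed subgroup, and (N_λ) a family of open normal subgroups of G forming a neighbourhood base at the identity. Then the sets B(H, N_λ) = {K closed subgroup : K·N_λ = H·N_λ} form a base of open neighbourhoods of H in the space S(G) of closed subgroups with the Vietoris topology. -/
open Pointwise

/-- The Vietoris topology on the subsets of `X`, generated by the sets
`{F | F ⊆ U}` and `{F | F ∩ U ≠ ∅}` for `U` open. Restricted to (nonempty) compact
subsets this is the usual Vietoris hyperspace topology. -/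
def vietorisTop (X : Type*) [TopologicalSpace X] : TopologicalSpace (Set X) :=
  TopologicalSpace.generateFrom
    ({t | ∃ U : Set X, IsOpen U ∧ t = {F : Set X | F ⊆ U}} ∪
     {t | ∃ U : Set X, IsOpen U ∧ t = {F : Set X | (F ∩ U).Nonempty}})

/-- `SG G` is the space of closed subgroups of `G`, topologized as a subspace of the
hyperspace of `G` with the Vietoris topology. -/
def SG (G : Type*) [Group G] [TopologicalSpace G] : Type _ :=
  {K : Subgroup G // IsClosed (K : Set G)}

instance SG.topologicalSpace (G : Type*) [Group G] [TopologicalSpace G] :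
    TopologicalSpace (SG G) :=
  TopologicalSpace.induced (fun K => (K.1 : Set G)) (vietorisTop G)

/-! The sets `K * N` are unions of left cosets of `N`, so comparing `K * N` with `H * N`
only needs finitely many cosets once `H` is compact and `N` is open; this makes
`B(H, N)` a finite intersection of subbasic Vietoris sets. Conversely every subbasic
neighbourhood of `H` contains some `B(H, N i)`, because `H * N i` shrinks to `H` and every
`K ∈ B(H, N i)` meets each coset `h • N i` with `h ∈ H`. -/

theorem Filter.HasBasis.directed_of_forall_true {α ι : Type*} {l : Filter α} {s : ι → Set α}
    (h : l.HasBasis (fun _ => True) s) : Directed (· ⊇ ·) s := fun i j => by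
  obtain ⟨k, -, hk⟩ :=
    h.mem_iff.1 (Filter.inter_mem (h.mem_of_mem trivial) (h.mem_of_mem trivial))
  exact ⟨k, fun _ hx => (hk hx).1, fun _ hx => (hk hx).2⟩

section SetMulSubgroup

variable {G : Type*} [Group G] {K H : Set G} {N : Subgroup G}

theorem Set.mul_subgroup_mul_self (K : Set G) (N : Subgroup G) :
    K * (N : Set G) * N = K * N := by
  rw [mul_assoc]
  exact congrArg (K * ·) N.toSubmonoid.coe_mul_self_eq

theorem Set.smul_subgroup_subset_mul_subgroup {g : G} (hg : g ∈ K * (N : Set G)) :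
    g • (N : Set G) ⊆ K * N := by
  rintro _ ⟨n, hn, rfl⟩
  obtain ⟨k, hk, m, hm, rfl⟩ := hg
  exact ⟨k, hk, m * n, mul_mem hm hn, (mul_assoc k m n).symm⟩

theorem Set.mem_mul_subgroup_iff_inter_smul_nonempty {g : G} :
    g ∈ K * (N : Set G) ↔ (K ∩ g • (N : Set G)).Nonempty := by
  constructor
  · rintro ⟨k, hk, n, hn, rfl⟩
    exact ⟨k, hk, n⁻¹, inv_mem hn, by simp [smul_eq_mul, mul_assoc]⟩
  · rintro ⟨_, hk, n, hn, rfl⟩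
    exact ⟨g • n, hk, n⁻¹, inv_mem hn, by simp [smul_eq_mul, mul_assoc]⟩

theorem Set.mul_subgroup_eq_iff :
    K * (N : Set G) = H * N ↔ K ⊆ H * N ∧ H ⊆ K * N := by
  constructor
  · intro h
    exact ⟨h ▸ subset_mul_left K N.one_mem, h ▸ subset_mul_left H N.one_mem⟩
  · rintro ⟨hKH, hHK⟩
    apply Subset.antisymm
    · simpa only [mul_subgroup_mul_self] using mul_subset_mul_right (t := (N : Set G)) hKH
    · simpa only [mul_subgroup_mul_self] using mul_subset_mul_right (t := (N : Set G)) hHK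

theorem Set.mul_subgroup_eq_of_le {N' : Subgroup G} (hN : N ≤ N')
    (h : K * (N : Set G) = H * N) : K * (N' : Set G) = H * N' := by
  rw [mul_subgroup_eq_iff] at h ⊢
  exact ⟨h.1.trans (mul_subset_mul_left hN), h.2.trans (mul_subset_mul_left hN)⟩

end SetMulSubgroup

namespace SG

variable {G : Type*} [Group G] [TopologicalSpace G]

theorem directed_setOf_mul_subgroup_eq {ι : Type*} (H : SG G) {N : ι → Subgroup G}
    (hN : Directed (· ⊇ ·) fun i => (N i : Set G)) :
    Directed (· ⊇ ·) fun i =>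
      {K : SG G | (K.1 : Set G) * (N i : Set G) = (H.1 : Set G) * (N i : Set G)} := fun i j =>
  let ⟨k, hki, hkj⟩ := hN i j
  ⟨k, fun _ hK => Set.mul_subgroup_eq_of_le hki hK,
    fun _ hK => Set.mul_subgroup_eq_of_le hkj hK⟩

theorem isOpen_setOf_subset {U : Set G} (hU : IsOpen U) :
    IsOpen {K : SG G | (K.1 : Set G) ⊆ U} :=
  (isOpen_induced_iff (t := vietorisTop G)).2
    ⟨_, TopologicalSpace.GenerateOpen.basic _ (Or.inl ⟨U, hU, rfl⟩), rfl⟩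

theorem isOpen_setOf_inter_nonempty {U : Set G} (hU : IsOpen U) :
    IsOpen {K : SG G | ((K.1 : Set G) ∩ U).Nonempty} :=
  (isOpen_induced_iff (t := vietorisTop G)).2
    ⟨_, TopologicalSpace.GenerateOpen.basic _ (Or.inr ⟨U, hU, rfl⟩), rfl⟩

theorem le_nhds_iff {F : Filter (SG G)} {H : SG G} :
    F ≤ nhds H ↔
      (∀ U : Set G, IsOpen U → (H.1 : Set G) ⊆ U →
        {K : SG G | (K.1 : Set G) ⊆ U} ∈ F) ∧
      (∀ U : Set G, IsOpen U → ((H.1 : Set G) ∩ U).Nonempty →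
        {K : SG G | ((K.1 : Set G) ∩ U).Nonempty} ∈ F) := by
  rw [nhds_induced (T := vietorisTop G), ← Filter.tendsto_iff_comap, vietorisTop,
    TopologicalSpace.tendsto_nhds_generateFrom_iff]
  simp only [Set.mem_union, Set.mem_ofPred_eq]
  constructor
  · exact fun h => ⟨fun U hU hH => h _ (Or.inl ⟨U, hU, rfl⟩) hH,
      fun U hU hH => h _ (Or.inr ⟨U, hU, rfl⟩) hH⟩
  · rintro ⟨hsub, hmeet⟩ s (⟨U, hU, rfl⟩ | ⟨U, hU, rfl⟩) hH
    exacts [hsub U hU hH, hmeet U hU hH]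

variable [IsTopologicalGroup G] [CompactSpace G]

theorem isOpen_setOf_mul_subgroup_eq (H : SG G) {N : Subgroup G} (hN : IsOpen (N : Set G)) :
    IsOpen {K : SG G | (K.1 : Set G) * (N : Set G) = (H.1 : Set G) * (N : Set G)} := by
  obtain ⟨T, hTH, hHT⟩ := H.2.isCompact.elim_nhds_subcover (fun h => h • (N : Set G))
    fun h _ => (hN.smul h).mem_nhds ⟨1, N.one_mem, mul_one h⟩
  have hB : {K : SG G | (K.1 : Set G) * (N : Set G) = (H.1 : Set G) * (N : Set G)} =
      {K : SG G | (K.1 : Set G) ⊆ (H.1 : Set G) * N} ∩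
        ⋂ t ∈ T, {K : SG G | ((K.1 : Set G) ∩ t • (N : Set G)).Nonempty} := by
    ext K
    simp only [Set.mem_ofPred_eq, Set.mem_inter_iff, Set.mem_iInter, Set.mul_subgroup_eq_iff,
      ← Set.mem_mul_subgroup_iff_inter_smul_nonempty]
    refine and_congr_right fun _ => ⟨fun h t ht => h (hTH t ht), fun h x hx => ?_⟩
    obtain ⟨t, ht, hxt⟩ := Set.mem_iUnion₂.1 (hHT hx)
    exact Set.smul_subgroup_subset_mul_subgroup (h t ht) hxt
  rw [hB]
  exact (isOpen_setOf_subset hN.mul_left).inter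
    (isOpen_biInter_finset fun t _ => isOpen_setOf_inter_nonempty (hN.smul t))

theorem iInf_principal_setOf_mul_subgroup_eq_le_nhds {ι : Type*} (H : SG G)
    {N : ι → Subgroup G}
    (hBase : (nhds (1 : G)).HasBasis (fun _ => True) fun i => (N i : Set G)) :
    ⨅ i, Filter.principal
      {K : SG G | (K.1 : Set G) * (N i : Set G) = (H.1 : Set G) * (N i : Set G)} ≤ nhds H := by
  refine le_nhds_iff.2 ⟨fun U hU hHU => ?_, fun U hU ⟨h, hhH, hhU⟩ => ?_⟩
  · obtain ⟨V, hV, hHV⟩ := compact_open_separated_mul_right H.2.isCompact hU hHU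
    obtain ⟨i, -, hNV⟩ := hBase.mem_iff.1 hV
    refine Filter.mem_iInf_of_mem i fun K (hK : _ = _) => ?_
    calc (K.1 : Set G) ⊆ K.1 * (N i : Set G) := Set.subset_mul_left _ (N i).one_mem
      _ = H.1 * (N i : Set G) := hK
      _ ⊆ H.1 * V := Set.mul_subset_mul_left hNV
      _ ⊆ U := hHV
  · have hU' : h⁻¹ • U ∈ nhds (1 : G) :=
      (hU.smul h⁻¹).mem_nhds ⟨h, hhU, inv_mul_cancel h⟩
    obtain ⟨i, -, hNU⟩ := hBase.mem_iff.1 hU'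
    refine Filter.mem_iInf_of_mem i fun K (hK : _ = _) => ?_
    have hhK : h ∈ (K.1 : Set G) * (N i : Set G) := hK ▸ Set.subset_mul_left _ (N i).one_mem hhH
    exact (Set.mem_mul_subgroup_iff_inter_smul_nonempty.1 hhK).mono
      (Set.inter_subset_inter_right _ (Set.smul_set_subset_iff_subset_inv_smul_set.2 hNU))

end SG

theorem subgroup_space_basis_general {G : Type*} [Group G] [TopologicalSpace G] [IsTopologicalGroup G]
    [CompactSpace G]
    {ι : Type*} (H : SG G) (N : ι → Subgroup G)
    (hOpen : ∀ i, IsOpen ((N i : Subgroup G) : Set G))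
    (hBase : (nhds (1 : G)).HasBasis (fun _ : ι => True)
      (fun i => ((N i : Subgroup G) : Set G))) :
    (∀ i, IsOpen {K : SG G |
        (K.1 : Set G) * ((N i : Subgroup G) : Set G)
          = (H.1 : Set G) * ((N i : Subgroup G) : Set G)}) ∧
    (nhds H).HasBasis (fun _ : ι => True)
      (fun i => {K : SG G |
        (K.1 : Set G) * ((N i : Subgroup G) : Set G)
          = (H.1 : Set G) * ((N i : Subgroup G) : Set G)}) := by
  have hOpenB := fun i => SG.isOpen_setOf_mul_subgroup_eq H (hOpen i)
  refine ⟨hOpenB, ?_⟩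
  have : Nonempty ι := hBase.ex_mem.nonempty
  convert Filter.hasBasis_iInf_principal
    (SG.directed_setOf_mul_subgroup_eq H hBase.directed_of_forall_true) using 1
  refine le_antisymm (le_iInf fun i => Filter.le_principal_iff.2 ((hOpenB i).mem_nhds rfl)) ?_
  exact SG.iInf_principal_setOf_mul_subgroup_eq_le_nhds H hBase

/-- Let `G` be a profinite group, `H` a closed subgroup, and `(N i)` a family of open
normal subgroups forming a neighbourhood base at the identity. Then the sets
`B(H, N i) = {K closed subgroup | K·(N i) = H·(N i)}` form a base of open
neighbourhoods of `H` in the space `S(G)` of closed subgroups. -/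
theorem subgroup_space_basis {G : Type*} [Group G] [TopologicalSpace G] [IsTopologicalGroup G]
    [CompactSpace G] [T2Space G] [TotallyDisconnectedSpace G]
    {ι : Type*} (H : SG G) (N : ι → Subgroup G)
    (hOpen : ∀ i, IsOpen ((N i : Subgroup G) : Set G))
    (hNormal : ∀ i, (N i).Normal)
    (hBase : (nhds (1 : G)).HasBasis (fun _ : ι => True)
      (fun i => ((N i : Subgroup G) : Set G))) :
    (∀ i, IsOpen {K : SG G |
        (K.1 : Set G) * ((N i : Subgroup G) : Set G)
          = (H.1 : Set G) * ((N i : Subgroup G) : Set G)}) ∧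
    (nhds H).HasBasis (fun _ : ι => True)
      (fun i => {K : SG G |
        (K.1 : Set G) * ((N i : Subgroup G) : Set G)
          = (H.1 : Set G) * ((N i : Subgroup G) : Set G)}) :=
  subgroup_space_basis_general H N hOpen hBase
end
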